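/- arXiv:1612.08094 — 2 statements merged into one kernel-verified Lean document; each statement's English description precedes it below -/
import Mathlib

section
/- Let d ≥ 1 be an integer, φ ∈ L¹(ℝ^d) ∩ L²(ℝ^d), and suppose there exist constants C, R₀ > 0 and p > d/2 such that |φ̂(ξ)| ≤ C ‖ξ‖^{−p} whenever ‖ξ‖ ≥ R₀. Then Σ_{k∈ℤ^d\{0}} |φ̂((2π/s)k)|² → 0 as s → 0⁺. -/
open MeasureTheory Real Filter

/-- The point of `ℝ^d` with integer coordinates `k`. -/
noncomputable def intVec {d : ℕ} (k : Fin d → ℤ) : EuclideanSpace ℝ (Fin d) :=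
  WithLp.toLp 2 (fun i => (k i : ℝ))

/-- Fourier transform `φ̂(ξ) = (2π)^{-d/2} ∫ φ(x) e^{-i⟨ξ,x⟩} dx`. -/
noncomputable def fhat {d : ℕ} (φ : EuclideanSpace ℝ (Fin d) → ℝ)
    (ξ : EuclideanSpace ℝ (Fin d)) : ℂ :=
  (((2 * π) ^ (-(d : ℝ) / 2) : ℝ) : ℂ) *
    ∫ x : EuclideanSpace ℝ (Fin d),
      (φ x : ℂ) * Complex.exp (-Complex.I * ((inner ℝ ξ x : ℝ) : ℂ))

lemma abs_coord_le_norm {d : ℕ} (k : Fin d → ℤ) (i : Fin d) :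
    |(k i : ℝ)| ≤ ‖intVec k‖ := by
  rw [EuclideanSpace.norm_eq, ← Real.sqrt_sq_eq_abs]
  apply Real.sqrt_le_sqrt
  have h : ((k i : ℝ))^2 = ‖intVec k i‖ ^ 2 := by simp [intVec]
  rw [h]
  exact Finset.single_le_sum (f := fun j => ‖intVec k j‖^2)
    (fun j _ => sq_nonneg _) (Finset.mem_univ i)

lemma one_le_norm_intVec {d : ℕ} {k : Fin d → ℤ} (hk : k ≠ 0) :
    1 ≤ ‖intVec k‖ := by
  obtain ⟨i, hi⟩ := Function.ne_iff.mp hk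
  refine le_trans ?_ (abs_coord_le_norm k i)
  have h1 : (1 : ℤ) ≤ |k i| := Int.one_le_abs (by simpa using hi)
  have : ((1:ℤ):ℝ) ≤ (|k i| : ℝ) := by exact_mod_cast h1
  simpa [Int.cast_abs] using this

lemma summable_max_abs {q : ℝ} (hq : 1 < q) :
    Summable (fun n : ℤ => (max |(n:ℝ)| 1) ^ (-q)) := by
  have h := (Real.summable_one_div_int_add_rpow 0 q).mpr hq
  simp only [add_zero] at h
  have hind : Summable (fun n : ℤ => if n = 0 then (1:ℝ) else 0) :=
    summable_of_ne_finset_zero (s := {0}) (by intro n hn; simp at hn; simp [hn])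
  refine Summable.of_nonneg_of_le (fun n => by positivity) ?_ (h.add hind)
  intro n
  rcases eq_or_ne n 0 with rfl | hn
  · simp [Real.zero_rpow (by linarith : q ≠ 0)]
  · have h1 : (1:ℝ) ≤ |(n:ℝ)| := by
      have h2 := Int.one_le_abs hn
      have h3 : ((1:ℤ):ℝ) ≤ (|n| : ℝ) := by exact_mod_cast h2
      simpa [Int.cast_abs] using h3
    rw [max_eq_left h1]
    simp only [hn, if_false, add_zero]
    rw [Real.rpow_neg (abs_nonneg _), one_div]

lemma summable_pi_prod {g : ℤ → ℝ} (hg : Summable g) (hg0 : ∀ n, 0 ≤ g n) :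
    ∀ d : ℕ, Summable (fun k : Fin d → ℤ => ∏ i, g (k i)) := by
  intro d
  induction d with
  | zero => exact Summable.of_finite
  | succ d ih =>
    have h := hg.mul_of_nonneg ih hg0 (fun k => Finset.prod_nonneg fun i _ => hg0 _)
    rw [← (Fin.consEquiv (fun _ : Fin (d+1) => ℤ)).summable_iff]
    refine h.congr fun x => ?_
    simp [Fin.prod_univ_succ, Fin.consEquiv]

lemma key_summable {d : ℕ} (hd : 1 ≤ d) {p : ℝ} (hp : (d:ℝ)/2 < p) :
    Summable (fun k : {k : Fin d → ℤ // k ≠ 0} =>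
      ‖intVec (k : Fin d → ℤ)‖ ^ (-(2*p))) := by
  have hd0 : (0:ℝ) < d := by exact_mod_cast Nat.lt_of_lt_of_le Nat.zero_lt_one hd
  set q := 2*p/d with hqdef
  have hq : 1 < q := by rw [hqdef, lt_div_iff₀ hd0]; linarith
  have hq0 : 0 < q := lt_trans one_pos hq
  have hsum := ((summable_pi_prod (summable_max_abs hq)
      (fun n => by positivity) d).subtype {k : Fin d → ℤ | k ≠ 0})
  refine Summable.of_nonneg_of_le (fun k => by positivity) ?_ hsum
  rintro ⟨k, hk⟩
  simp only [Function.comp_apply]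
  set N := ‖intVec k‖ with hN
  have hN1 : 1 ≤ N := one_le_norm_intVec hk
  have hN0 : 0 < N := lt_of_lt_of_le one_pos hN1
  set A := ∏ i, max |((k i : ℤ) : ℝ)| 1 with hA
  have hA0 : (0:ℝ) < A := Finset.prod_pos fun i _ => lt_max_of_lt_right one_pos
  have hAle : A ≤ N ^ d := by
    have h := Finset.prod_le_prod (s := Finset.univ) (f := fun i : Fin d => max |((k i : ℤ) : ℝ)| 1)
      (g := fun _ => N) (fun i _ => by positivity)
      (fun i _ => max_le (abs_coord_le_norm k i) hN1)
    simpa using h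
  have e1 : (N ^ (d:ℕ)) ^ (-q) = N ^ (-(2*p)) := by
    rw [← Real.rpow_natCast N d, ← Real.rpow_mul (le_of_lt hN0)]
    congr 1
    have hdq : (d:ℝ) * q = 2*p := by rw [hqdef]; field_simp [hd0.ne']
    linarith
  calc N ^ (-(2*p)) = (N ^ (d:ℕ)) ^ (-q) := e1.symm
    _ ≤ A ^ (-q) := Real.rpow_le_rpow_of_nonpos hA0 hAle (by linarith)
    _ = ∏ i, (max |((k i : ℤ) : ℝ)| 1) ^ (-q) :=
        (Real.finset_prod_rpow Finset.univ (fun i => max |((k i : ℤ) : ℝ)| 1)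
          (fun i _ => by positivity) (-q)).symm

/-- **Statement 16.** If `φ ∈ L¹ ∩ L²` has Fourier decay `|φ̂(ξ)| ≤ C ‖ξ‖^{-p}` for
`‖ξ‖ ≥ R₀` with `p > d/2`, then `Σ_{k ≠ 0} |φ̂((2π/s)k)|² → 0` as `s → 0⁺`. -/
theorem lattice_sum_tendsto_zero
    {d : ℕ} (hd : 1 ≤ d) (φ : EuclideanSpace ℝ (Fin d) → ℝ)
    (hφ1 : Integrable φ (volume : Measure (EuclideanSpace ℝ (Fin d))))
    (hφ2 : MemLp φ 2 (volume : Measure (EuclideanSpace ℝ (Fin d))))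
    (C R₀ p : ℝ) (hC : 0 < C) (hR₀ : 0 < R₀) (hp : (d : ℝ) / 2 < p)
    (hdecay : ∀ ξ : EuclideanSpace ℝ (Fin d), R₀ ≤ ‖ξ‖ →
      ‖fhat φ ξ‖ ≤ C * ‖ξ‖ ^ (-p)) :
    Tendsto (fun s : ℝ =>
        ∑' k : {k : Fin d → ℤ // k ≠ 0},
          ‖fhat φ ((2 * π / s) • intVec (k : Fin d → ℤ))‖ ^ 2)
      (nhdsWithin 0 (Set.Ioi 0)) (nhds 0) := by
  have hS := key_summable hd hp
  set S : ℝ := ∑' k : {k : Fin d → ℤ // k ≠ 0}, ‖intVec (k : Fin d → ℤ)‖ ^ (-(2*p)) with hSdef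
  have hp0 : 0 < p := lt_of_le_of_lt (by positivity) hp
  -- the dominating function
  have htend : Tendsto (fun s : ℝ => C^2 * (2 * π / s) ^ (-(2*p)) * S)
      (nhdsWithin 0 (Set.Ioi 0)) (nhds 0) := by
    have h1 : Tendsto (fun s : ℝ => 2 * π / s) (nhdsWithin 0 (Set.Ioi 0)) atTop := by
      have := tendsto_inv_nhdsGT_zero.const_mul_atTop (by positivity : (0:ℝ) < 2 * π)
      simpa [div_eq_mul_inv] using this
    have h2 : Tendsto (fun s : ℝ => (2 * π / s) ^ (-(2*p)))
        (nhdsWithin 0 (Set.Ioi 0)) (nhds 0) :=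
      (tendsto_rpow_neg_atTop (by linarith : 0 < 2*p)).comp h1
    have := (h2.const_mul (C^2)).mul_const S
    simpa using this
  refine squeeze_zero' ?_ ?_ htend
  · filter_upwards with s
    exact tsum_nonneg fun k => by positivity
  · have hmem : Set.Ioo (0:ℝ) (2 * π / R₀) ∈ nhdsWithin (0:ℝ) (Set.Ioi 0) := by
      apply Ioo_mem_nhdsGT_of_mem
      constructor
      · exact le_refl 0
      · positivity
    filter_upwards [hmem] with s hs
    obtain ⟨hs0, hs1⟩ := hs
    set a : ℝ := 2 * π / s with ha
    have ha0 : 0 < a := by positivity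
    have haR : R₀ ≤ a := by
      rw [ha, le_div_iff₀ hs0]
      rw [lt_div_iff₀ hR₀] at hs1
      linarith [hs1]
    have hterm : ∀ k : {k : Fin d → ℤ // k ≠ 0},
        ‖fhat φ (a • intVec (k : Fin d → ℤ))‖ ^ 2
          ≤ C^2 * a ^ (-(2*p)) * ‖intVec (k : Fin d → ℤ)‖ ^ (-(2*p)) := by
      rintro ⟨k, hk⟩
      have h1 : 1 ≤ ‖intVec k‖ := one_le_norm_intVec hk
      have hnrm : ‖a • intVec k‖ = a * ‖intVec k‖ := by
        rw [norm_smul, Real.norm_eq_abs, abs_of_pos ha0]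
      have hge : R₀ ≤ ‖a • intVec k‖ := by
        rw [hnrm]
        calc R₀ ≤ a := haR
        _ = a * 1 := (mul_one a).symm
        _ ≤ a * ‖intVec k‖ := by gcongr
      have hb := hdecay _ hge
      have hpos : (0:ℝ) < ‖a • intVec k‖ := lt_of_lt_of_le hR₀ hge
      calc ‖fhat φ (a • intVec k)‖ ^ 2
          ≤ (C * ‖a • intVec k‖ ^ (-p)) ^ 2 := by
            apply pow_le_pow_left₀ (norm_nonneg _) hb
        _ = C^2 * (‖a • intVec k‖ ^ (-p)) ^ 2 := by ring
        _ = C^2 * ‖a • intVec k‖ ^ (-(2*p)) := by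
            rw [← Real.rpow_natCast (‖a • intVec k‖ ^ (-p)) 2,
              ← Real.rpow_mul (le_of_lt hpos)]
            congr 1
            push_cast
            ring
        _ = C^2 * (a ^ (-(2*p)) * ‖intVec k‖ ^ (-(2*p))) := by
            rw [hnrm, Real.mul_rpow (le_of_lt ha0) (norm_nonneg _)]
        _ = C^2 * a ^ (-(2*p)) * ‖intVec k‖ ^ (-(2*p)) := by ring
    have hgsum : Summable (fun k : {k : Fin d → ℤ // k ≠ 0} =>
        C^2 * a ^ (-(2*p)) * ‖intVec (k : Fin d → ℤ)‖ ^ (-(2*p))) :=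
      hS.mul_left _
    calc (∑' k : {k : Fin d → ℤ // k ≠ 0},
          ‖fhat φ (a • intVec (k : Fin d → ℤ))‖ ^ 2)
        ≤ ∑' k : {k : Fin d → ℤ // k ≠ 0},
            C^2 * a ^ (-(2*p)) * ‖intVec (k : Fin d → ℤ)‖ ^ (-(2*p)) := by
          apply Summable.tsum_le_tsum hterm ?_ hgsum
          exact Summable.of_nonneg_of_le (fun k => by positivity) hterm hgsum
      _ = C^2 * a ^ (-(2*p)) * S := by
          rw [hSdef, ← tsum_mul_left]
end

section
/- Let d ≥ 1 be an integer, φ ∈ L¹(ℝ^d) ∩ L²(ℝ^d) with φ̂(0) ≠ 0, and suppose there exist constants C, R₀ > 0 and p > d/2 such that |φ̂(ξ)| ≤ C ‖ξ‖^{−p} whenever ‖ξ‖ ≥ R₀. Define the saturation error A_{φ,s} := Σ_{k∈ℤ^d\{0}} |φ̂((2π/s)k)|² / Σ_{k∈ℤ^d} |φ̂((2π/s)k)|². Then A_{φ,s} → 0 as s → 0⁺. -/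
open MeasureTheory Real Filter

/-- The saturation error `A_{φ,s} = Σ_{k ≠ 0} |φ̂((2π/s)k)|² / Σ_k |φ̂((2π/s)k)|²`. -/
noncomputable def satError {d : ℕ} (φ : EuclideanSpace ℝ (Fin d) → ℝ) (s : ℝ) : ℝ :=
  (∑' k : {k : Fin d → ℤ // k ≠ 0},
      ‖fhat φ ((2 * π / s) • intVec (k : Fin d → ℤ))‖ ^ 2) /
    ∑' k : Fin d → ℤ, ‖fhat φ ((2 * π / s) • intVec k)‖ ^ 2


lemma aux_summable_int {r : ℝ} (hr : 1 < r) :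
    Summable (fun n : ℤ => (1 + |(n : ℝ)|) ^ (-r)) := by
  have h0 : Summable (fun n : ℕ => ((n : ℝ)) ^ (-r)) :=
    Real.summable_nat_rpow.mpr (by linarith)
  have h1 : Summable (fun n : ℕ => (1 + (n : ℝ)) ^ (-r)) := by
    have h2 := (summable_nat_add_iff 1).mpr h0
    exact h2.congr fun n => by push_cast; ring_nf
  apply Summable.of_nat_of_neg
  · exact h1.congr fun n => by simp
  · exact h1.congr fun n => by simp

lemma aux_summable_pi (n : ℕ) {r : ℝ} (hr : 1 < r) :
    Summable (fun k : Fin n → ℤ => ∏ i, (1 + |((k i : ℝ))|) ^ (-r)) := by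
  induction n with
  | zero => exact Summable.of_finite
  | succ m ih =>
    rw [← (Fin.consEquiv (fun _ : Fin (m + 1) => ℤ)).summable_iff]
    have h2 := (aux_summable_int hr).mul_of_nonneg ih
      (fun x => by positivity) (fun x => by positivity)
    apply h2.congr
    intro x
    simp [Function.comp, Fin.prod_univ_succ]

lemma intVec_coord_le {d : ℕ} (k : Fin d → ℤ) (i : Fin d) : |((k i : ℝ))| ≤ ‖intVec k‖ := by
  have h1 : ‖intVec k‖ = Real.sqrt (∑ j, ((k j : ℝ)) ^ 2) := by
    rw [EuclideanSpace.norm_eq]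
    congr 1
    refine Finset.sum_congr rfl fun j _ => ?_
    rw [Real.norm_eq_abs, sq_abs]
    simp [intVec]
  rw [h1, ← Real.sqrt_sq_eq_abs]
  exact Real.sqrt_le_sqrt (Finset.single_le_sum (f := fun j => ((k j : ℝ)) ^ 2)
    (fun j _ => sq_nonneg _) (Finset.mem_univ i))

lemma intVec_zero {d : ℕ} : intVec (0 : Fin d → ℤ) = 0 := by
  ext i; simp [intVec]

lemma norm_rpow_le_aux {d : ℕ} (hd : 1 ≤ d) {q : ℝ} (hq : 0 < q) {k : Fin d → ℤ} (hk : k ≠ 0) :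
    ‖intVec k‖ ^ (-q) ≤ 2 ^ q * ∏ i, (1 + |((k i : ℝ))|) ^ (-(q / d)) := by
  have hdpos : (0 : ℝ) < d := by exact_mod_cast hd
  set Nk := ‖intVec k‖ with hNk
  have hN1 : 1 ≤ Nk := one_le_norm_intVec hk
  have hN0 : (0 : ℝ) < Nk := by linarith
  have h2N : (0 : ℝ) < 2 * Nk := by linarith
  have hprodpos : (0 : ℝ) < ∏ i, (1 + |((k i : ℝ))|) :=
    Finset.prod_pos (fun i _ => by positivity)
  have hle : ∏ i, (1 + |((k i : ℝ))|) ≤ (2 * Nk) ^ (d : ℕ) := by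
    calc ∏ i, (1 + |((k i : ℝ))|) ≤ ∏ _i : Fin d, (2 * Nk) :=
          Finset.prod_le_prod (fun i _ => by positivity)
            (fun i _ => by have := intVec_coord_le k i; rw [← hNk] at this; linarith)
      _ = (2 * Nk) ^ (d : ℕ) := by simp
  have hmono := Real.rpow_le_rpow_of_nonpos hprodpos hle
    (neg_nonpos.mpr (le_of_lt (div_pos hq hdpos)))
  have heq : ((2 * Nk) ^ (d : ℕ) : ℝ) ^ (-(q / d)) = (2 * Nk) ^ (-q) := by
    rw [← Real.rpow_natCast (2 * Nk) d, ← Real.rpow_mul h2N.le]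
    congr 1
    field_simp
  have key : (2 * Nk) ^ (-q) ≤ (∏ i, (1 + |((k i : ℝ))|)) ^ (-(q / d)) := heq ▸ hmono
  have hsplit : (2 * Nk) ^ (-q) = 2 ^ (-q) * Nk ^ (-q) :=
    Real.mul_rpow (by norm_num) hN0.le
  have hprod_rpow : ∏ i, (1 + |((k i : ℝ))|) ^ (-(q / d))
      = (∏ i, (1 + |((k i : ℝ))|)) ^ (-(q / d)) :=
    Real.finset_prod_rpow _ _ (fun i _ => by positivity) _
  rw [hprod_rpow]
  calc Nk ^ (-q) = 2 ^ q * (2 ^ (-q) * Nk ^ (-q)) := by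
        rw [← mul_assoc, ← Real.rpow_add two_pos, add_neg_cancel, Real.rpow_zero, one_mul]
    _ = 2 ^ q * (2 * Nk) ^ (-q) := by rw [hsplit]
    _ ≤ 2 ^ q * (∏ i, (1 + |((k i : ℝ))|)) ^ (-(q / d)) := by
        apply mul_le_mul_of_nonneg_left key (by positivity)

set_option maxHeartbeats 1000000 in
/-- **Statement 17.** If `φ ∈ L¹ ∩ L²` with `φ̂(0) ≠ 0` has Fourier decay
`|φ̂(ξ)| ≤ C ‖ξ‖^{-p}` for `‖ξ‖ ≥ R₀` with `p > d/2`, then the saturation error `A_{φ,s}`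
tends to `0` as `s → 0⁺`. -/
theorem saturation_error_tendsto_zero
    {d : ℕ} (hd : 1 ≤ d) (φ : EuclideanSpace ℝ (Fin d) → ℝ)
    (hφ1 : Integrable φ (volume : Measure (EuclideanSpace ℝ (Fin d))))
    (hφ2 : MemLp φ 2 (volume : Measure (EuclideanSpace ℝ (Fin d))))
    (hφ0 : fhat φ 0 ≠ 0)
    (C R₀ p : ℝ) (hC : 0 < C) (hR₀ : 0 < R₀) (hp : (d : ℝ) / 2 < p)
    (hdecay : ∀ ξ : EuclideanSpace ℝ (Fin d), R₀ ≤ ‖ξ‖ →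
      ‖fhat φ ξ‖ ≤ C * ‖ξ‖ ^ (-p)) :
    Tendsto (fun s : ℝ => satError φ s) (nhdsWithin 0 (Set.Ioi 0)) (nhds 0) := by
  have hπ := Real.pi_pos
  have hdpos : (0 : ℝ) < d := by exact_mod_cast hd
  set q : ℝ := 2 * p with hqdef
  have hq : (d : ℝ) < q := by rw [hqdef]; linarith
  have hq0 : 0 < q := lt_trans hdpos hq
  have hr : 1 < q / d := (one_lt_div hdpos).mpr hq
  -- summability of the comparison function
  have hSnorm : Summable (fun k : Fin d → ℤ => ‖intVec k‖ ^ (-q)) := by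
    refine Summable.of_nonneg_of_le (fun k => Real.rpow_nonneg (norm_nonneg _) _)
      ?_ ((aux_summable_pi d hr).mul_left (2 ^ q))
    intro k
    by_cases hk : k = 0
    · subst hk
      rw [intVec_zero, norm_zero, Real.zero_rpow (neg_ne_zero.mpr hq0.ne')]
      positivity
    · exact norm_rpow_le_aux hd hq0 hk
  set F : ℝ → (Fin d → ℤ) → ℝ :=
    fun s k => ‖fhat φ ((2 * π / s) • intVec k)‖ ^ 2 with hFdef
  set B : ℝ := ‖fhat φ 0‖ ^ 2 with hBdef
  have hB : 0 < B := pow_pos (norm_pos_iff.mpr hφ0) 2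
  set S : ℝ := ∑' k : {k : Fin d → ℤ // k ≠ 0}, ‖intVec (k : Fin d → ℤ)‖ ^ (-q) with hSdef
  have hSsub : Summable (fun k : {k : Fin d → ℤ // k ≠ 0} => ‖intVec (k : Fin d → ℤ)‖ ^ (-q)) :=
    hSnorm.subtype _
  set N : ℝ → ℝ := fun s => ∑' k : {k : Fin d → ℤ // k ≠ 0}, F s (k : Fin d → ℤ) with hNdef
  -- the basic per-term bound, for 0 < s ≤ 2π/R₀
  have hbound : ∀ s : ℝ, 0 < s → s ≤ 2 * π / R₀ → ∀ k : Fin d → ℤ, k ≠ 0 →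
      F s k ≤ C ^ 2 * (2 * π / s) ^ (-q) * ‖intVec k‖ ^ (-q) := by
    intro s hs0 hsle k hk
    have hss : R₀ ≤ 2 * π / s := by
      rw [le_div_iff₀ hs0]
      rw [le_div_iff₀ hR₀, mul_comm] at hsle
      linarith
    have hnk := one_le_norm_intVec hk
    have h2πs : (0 : ℝ) < 2 * π / s := by positivity
    have hnorm : ‖(2 * π / s) • intVec k‖ = (2 * π / s) * ‖intVec k‖ := by
      rw [norm_smul, Real.norm_eq_abs, abs_of_pos h2πs]
    have hξ : R₀ ≤ ‖(2 * π / s) • intVec k‖ := by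
      rw [hnorm]
      calc R₀ ≤ 2 * π / s := hss
        _ = (2 * π / s) * 1 := by ring
        _ ≤ (2 * π / s) * ‖intVec k‖ := by gcongr
    have hdec := hdecay _ hξ
    have hξpos : (0 : ℝ) < ‖(2 * π / s) • intVec k‖ := by
      rw [hnorm]; nlinarith
    have hsq : F s k ≤ (C * ‖(2 * π / s) • intVec k‖ ^ (-p)) ^ 2 :=
      pow_le_pow_left₀ (norm_nonneg _) hdec 2
    refine hsq.trans_eq ?_
    calc (C * ‖(2 * π / s) • intVec k‖ ^ (-p)) ^ 2
        = C ^ 2 * (‖(2 * π / s) • intVec k‖ ^ (-p) * ‖(2 * π / s) • intVec k‖ ^ (-p)) := by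
          ring
      _ = C ^ 2 * ‖(2 * π / s) • intVec k‖ ^ (-q) := by
          rw [← Real.rpow_add hξpos]
          congr 1
          rw [hqdef]; ring_nf
      _ = C ^ 2 * ((2 * π / s) ^ (-q) * ‖intVec k‖ ^ (-q)) := by
          rw [hnorm, Real.mul_rpow h2πs.le (norm_nonneg _)]
      _ = C ^ 2 * (2 * π / s) ^ (-q) * ‖intVec k‖ ^ (-q) := by ring
  -- summability of F s on the nonzero lattice, for small s
  have hFsub : ∀ s : ℝ, 0 < s → s ≤ 2 * π / R₀ →
      Summable (fun k : {k : Fin d → ℤ // k ≠ 0} => F s (k : Fin d → ℤ)) := by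
    intro s hs0 hsle
    exact Summable.of_nonneg_of_le (fun k => sq_nonneg _)
      (fun k => hbound s hs0 hsle k k.2) (hSsub.mul_left (C ^ 2 * (2 * π / s) ^ (-q)))
  -- the numerator bound
  have hNle : ∀ s : ℝ, 0 < s → s ≤ 2 * π / R₀ → N s ≤ C ^ 2 * (2 * π / s) ^ (-q) * S := by
    intro s hs0 hsle
    calc N s ≤ ∑' k : {k : Fin d → ℤ // k ≠ 0},
          C ^ 2 * (2 * π / s) ^ (-q) * ‖intVec (k : Fin d → ℤ)‖ ^ (-q) :=
          Summable.tsum_le_tsum (fun k => hbound s hs0 hsle k k.2) (hFsub s hs0 hsle)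
            (hSsub.mul_left _)
      _ = C ^ 2 * (2 * π / s) ^ (-q) * S := tsum_mul_left
  -- N tends to zero
  have hmem : Set.Ioc (0 : ℝ) (2 * π / R₀) ∈ nhdsWithin (0 : ℝ) (Set.Ioi 0) :=
    Ioc_mem_nhdsGT_of_mem ⟨le_refl 0, by positivity⟩
  have hbtend : Tendsto (fun s : ℝ => C ^ 2 * (2 * π / s) ^ (-q) * S)
      (nhdsWithin 0 (Set.Ioi 0)) (nhds 0) := by
    have h1 : Tendsto (fun s : ℝ => 2 * π / s) (nhdsWithin 0 (Set.Ioi 0)) atTop := by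
      have h2 := tendsto_inv_nhdsGT_zero (𝕜 := ℝ)
      have h3 := h2.const_mul_atTop (show (0:ℝ) < 2 * π by positivity)
      simpa [div_eq_mul_inv] using h3
    have h4 := (tendsto_rpow_neg_atTop hq0).comp h1
    have h5 := (h4.const_mul (C ^ 2)).mul_const S
    simpa using h5
  have hNtend : Tendsto N (nhdsWithin 0 (Set.Ioi 0)) (nhds 0) := by
    apply tendsto_of_tendsto_of_tendsto_of_le_of_le' tendsto_const_nhds hbtend
    · exact Eventually.of_forall fun s => tsum_nonneg fun k => sq_nonneg _
    · filter_upwards [hmem] with s hs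
      exact hNle s hs.1 hs.2
  -- the denominator splits as B + N s
  have hsplit : ∀ s : ℝ, 0 < s → s ≤ 2 * π / R₀ →
      (∑' k : Fin d → ℤ, F s k) = B + N s := by
    intro s hs0 hsle
    have hF0 : F s 0 = B := by
      rw [hFdef]
      simp only [intVec_zero, smul_zero]
      rfl
    have hsum0 : Summable (fun k : ({0} : Set (Fin d → ℤ)) => F s (k : Fin d → ℤ)) :=
      Summable.of_finite
    have hsumc : Summable (fun k : (({0} : Set (Fin d → ℤ))ᶜ : Set (Fin d → ℤ)) =>
        F s (k : Fin d → ℤ)) := by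
      have := hFsub s hs0 hsle
      refine this.comp_injective (i := fun k : (({0} : Set (Fin d → ℤ))ᶜ : Set (Fin d → ℤ)) =>
        (⟨k.1, Set.mem_compl_singleton_iff.mp k.2⟩ : {k : Fin d → ℤ // k ≠ 0})) ?_
      intro a b hab
      ext1
      exact congrArg Subtype.val hab
    have h := Summable.tsum_add_tsum_compl (f := F s) hsum0 hsumc
    rw [← h, tsum_singleton, hF0]
    congr 1
  -- eventually, satError = N s / (N s + B)
  have hev : (fun s : ℝ => satError φ s) =ᶠ[nhdsWithin (0:ℝ) (Set.Ioi 0)]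
      (fun s => N s / (N s + B)) := by
    filter_upwards [hmem] with s hs
    rw [satError]
    rw [hsplit s hs.1 hs.2]
    rw [add_comm]
  -- conclude
  have hfinal : Tendsto (fun s => N s / (N s + B)) (nhdsWithin (0:ℝ) (Set.Ioi 0)) (nhds 0) := by
    have hden : Tendsto (fun s => N s + B) (nhdsWithin (0:ℝ) (Set.Ioi 0)) (nhds (0 + B)) :=
      hNtend.add_const B
    have := hNtend.div hden (by positivity)
    rw [zero_div] at this; exact this
  exact hfinal.congr' hev.symm
end
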